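/- arXiv:math/0306435 — 5 statements merged into one kernel-verified Lean document; each statement's English description precedes it below -/
import Mathlib

section
/- Let k be an algebraically closed field of characteristic p and let V be the 2-dimensional subspace of k^{n+1} spanned by (x, x^p) for a point x ∈ k^{n+1} not proportional to any F_p-rational vector (where x^p denotes coordinatewise p-th power). For two such points x and y, the spaces spanned by (x, x^p) and (y, y^p) coincide if and only if x and y lie in the same 2-dimensional F_p-rational subspace of k^{n+1} (equivalently, the corresponding points of P^n lie on the same F_p-rational line). -/
open Polynomial in
/-- In a field of characteristic `p`, the solutions of `t^p = t` are exactly the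
elements of the prime field. -/
lemma fp_fixed_mem {p : ℕ} [Fact p.Prime] {k : Type*} [Field k] [CharP k p]
    (t : k) (ht : t ^ p = t) : ∃ m : ZMod p, (ZMod.castHom (dvd_refl p) k) m = t := by
  classical
  have hp1 : 1 < p := (Fact.out : p.Prime).one_lt
  set g : k[X] := X ^ p - X with hg
  have hgne : g ≠ 0 := by
    intro h
    have h2 : (X ^ p : k[X]) = X := sub_eq_zero.mp h
    have h3 := congrArg natDegree h2
    rw [natDegree_X_pow, natDegree_X] at h3
    omega
  have hdeg : g.natDegree ≤ p := by
    refine (natDegree_sub_le _ _).trans ?_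
    rw [natDegree_X_pow, natDegree_X]
    omega
  set F : Finset k := Finset.univ.image (fun m : ZMod p => (ZMod.castHom (dvd_refl p) k) m)
    with hF
  have hFcard : F.card = p := by
    rw [hF, Finset.card_image_of_injective _ (RingHom.injective _), Finset.card_univ, ZMod.card]
  have hFsub : F ⊆ g.roots.toFinset := by
    intro a ha
    rw [hF, Finset.mem_image] at ha
    obtain ⟨m, _, rfl⟩ := ha
    rw [Multiset.mem_toFinset, mem_roots hgne]
    show g.eval _ = 0
    rw [hg]
    simp only [eval_sub, eval_pow, eval_X]
    rw [← map_pow, ZMod.pow_card, sub_self]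
  have hcard2 : g.roots.toFinset.card ≤ p :=
    le_trans (Multiset.toFinset_card_le _) (le_trans (g.card_roots') hdeg)
  have hFeq : F = g.roots.toFinset :=
    Finset.eq_of_subset_of_card_le hFsub (by rw [hFcard]; exact hcard2)
  have htmem : t ∈ g.roots.toFinset := by
    rw [Multiset.mem_toFinset, mem_roots hgne]
    show g.eval t = 0
    rw [hg]
    simp only [eval_sub, eval_pow, eval_X]
    rw [ht, sub_self]
  rw [← hFeq, hF, Finset.mem_image] at htmem
  obtain ⟨m, _, hm⟩ := htmem
  exact ⟨m, hm⟩

open Polynomial in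
/-- Existence of two `F_p`-independent roots of the separable additive polynomial
`A X^(p²) + B X^p - X` over an algebraically closed field. -/
lemma fp_exists_roots {p : ℕ} [Fact p.Prime] {k : Type*} [Field k] [IsAlgClosed k] [CharP k p]
    (A B : k) (hA : A ≠ 0) :
    ∃ b₁ b₂ : k, b₁ ≠ 0 ∧ (∀ m : ZMod p, b₂ ≠ (ZMod.castHom (dvd_refl p) k) m * b₁) ∧
      A * b₁ ^ (p * p) + B * b₁ ^ p = b₁ ∧ A * b₂ ^ (p * p) + B * b₂ ^ p = b₂ := by
  classical
  have hp1 : 1 < p := (Fact.out : p.Prime).one_lt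
  have hpp : p < p * p := by nlinarith
  set f : k[X] := C A * X ^ (p * p) + (C B * X ^ p - X) with hf
  have hcast : ((p : ℕ) : k) = 0 := CharP.cast_eq_zero k p
  have hcast2 : ((p * p : ℕ) : k) = 0 := by rw [Nat.cast_mul, hcast, zero_mul]
  have hd : derivative f = -1 := by
    rw [hf]
    simp only [derivative_add, derivative_sub, derivative_C_mul, derivative_X_pow, derivative_X,
      hcast, hcast2, map_zero, zero_mul, mul_zero, zero_sub, add_zero, zero_add]
  have hsep : f.Separable := by
    rw [Polynomial.Separable, hd]
    exact (isCoprime_one_right).neg_right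
  have hdeg : f.natDegree = p * p := by
    rw [hf]
    rw [natDegree_add_eq_left_of_natDegree_lt, natDegree_C_mul hA, natDegree_X_pow]
    rw [natDegree_C_mul hA, natDegree_X_pow]
    refine lt_of_le_of_lt (natDegree_sub_le _ _) ?_
    have h1 : (C B * X ^ p : k[X]).natDegree ≤ p := by
      rcases eq_or_ne B 0 with hB | hB
      · simp [hB]
      · rw [natDegree_C_mul hB, natDegree_X_pow]
    rw [natDegree_X]
    omega
  have hfne : f ≠ 0 := by
    intro h
    rw [h, natDegree_zero] at hdeg
    omega
  have hcardroots : Multiset.card f.roots = p * p := by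
    rw [splits_iff_card_roots.mp (IsAlgClosed.splits f), hdeg]
  set R : Finset k := f.roots.toFinset with hR
  have hRcard : R.card = p * p := by
    rw [hR, Multiset.toFinset_card_of_nodup (nodup_roots hsep), hcardroots]
  have hroot : ∀ b ∈ R, A * b ^ (p * p) + B * b ^ p = b := by
    intro b hb
    rw [hR, Multiset.mem_toFinset, mem_roots hfne] at hb
    have hb' : f.eval b = 0 := hb
    rw [hf] at hb'
    simp only [eval_add, eval_sub, eval_mul, eval_C, eval_pow, eval_X] at hb'
    linear_combination hb'
  obtain ⟨b₁, hb₁R, hb₁ne⟩ := Finset.exists_mem_ne (s := R) (by omega) 0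
  set F1 : Finset k := Finset.univ.image (fun m : ZMod p => (ZMod.castHom (dvd_refl p) k) m * b₁)
    with hF1
  have hF1card : F1.card ≤ p := by
    refine le_trans (Finset.card_image_le) ?_
    rw [Finset.card_univ, ZMod.card]
  have hex : ∃ b₂ ∈ R, b₂ ∉ F1 := by
    by_contra h
    push_neg at h
    have : R ⊆ F1 := h
    have := Finset.card_le_card this
    omega
  obtain ⟨b₂, hb₂R, hb₂F⟩ := hex
  refine ⟨b₁, b₂, hb₁ne, ?_, hroot b₁ hb₁R, hroot b₂ hb₂R⟩
  intro m hm
  exact hb₂F (by rw [hF1, Finset.mem_image]; exact ⟨m, Finset.mem_univ m, hm.symm⟩)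

/-- A fixed vector of the coordinatewise Frobenius comes from a vector over `ZMod p`. -/
lemma fp_fixed_vec {p : ℕ} [Fact p.Prime] {k : Type*} [Field k] [CharP k p] {m : ℕ}
    (v : Fin m → k) (hv : ∀ i, v i ^ p = v i) :
    ∃ u : Fin m → ZMod p, (fun i => (ZMod.castHom (dvd_refl p) k) (u i)) = v := by
  choose u hu using fun i => fp_fixed_mem (v i) (hv i)
  exact ⟨u, funext hu⟩

/-- The span of `F_p`-rational vectors is stable under coordinatewise Frobenius. -/
lemma fp_span_stable {p : ℕ} [Fact p.Prime] {k : Type*} [Field k] [CharP k p] {m : ℕ}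
    (S : Set (Fin m → ZMod p)) {w : Fin m → k}
    (hw : w ∈ Submodule.span k
      ((fun v : Fin m → ZMod p => fun i => (ZMod.castHom (dvd_refl p) k) (v i)) '' S)) :
    (fun i => w i ^ p) ∈ Submodule.span k
      ((fun v : Fin m → ZMod p => fun i => (ZMod.castHom (dvd_refl p) k) (v i)) '' S) := by
  induction hw using Submodule.span_induction with
  | mem v hv =>
    obtain ⟨u, hu, rfl⟩ := hv
    have h1 : (fun i => (fun j => (ZMod.castHom (dvd_refl p) k) (u j)) i ^ p)
        = fun i => (ZMod.castHom (dvd_refl p) k) (u i) := by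
      funext i
      simp only
      rw [← map_pow, ZMod.pow_card]
    rw [h1]
    exact Submodule.subset_span ⟨u, hu, rfl⟩
  | zero =>
    have h1 : (fun i => (0 : Fin m → k) i ^ p) = (0 : Fin m → k) := by
      funext i
      simp [zero_pow (Nat.Prime.ne_zero (Fact.out : p.Prime))]
    rw [h1]
    exact Submodule.zero_mem _
  | add a b _ _ ha hb =>
    have h1 : (fun i => (a + b) i ^ p) = (fun i => a i ^ p) + fun i => b i ^ p := by
      funext i
      simpa using add_pow_char (a i) (b i) p
    rw [h1]
    exact Submodule.add_mem _ ha hb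
  | smul c a _ ha =>
    have h1 : (fun i => (c • a) i ^ p) = c ^ p • fun i => a i ^ p := by
      funext i
      simp [mul_pow]
    rw [h1]
    exact Submodule.smul_mem _ _ ha

lemma fp_finrank_span_pair {k : Type*} [Field k] {M : Type*} [AddCommGroup M] [Module k M]
    {a b : M} (h : LinearIndependent k ![a, b]) :
    Module.finrank k (Submodule.span k {a, b}) = 2 := by
  have hr : Set.range ![a, b] = {a, b} := by
    ext z
    simp [Matrix.range_cons, Matrix.range_empty]
    tauto
  rw [← hr, finrank_span_eq_card h, Fintype.card_fin]

/-- for `x, y` (linearly independent, each independent from its Frobenius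
image) the planes `span{x, x^p}` and `span{y, y^p}` coincide iff `x` and `y` lie in a
common 2-dimensional `F_p`-rational subspace of `k^{n+1}`. -/
theorem stmt_4 (p n : ℕ) [Fact p.Prime] (hn : 3 ≤ n)
    (k : Type*) [Field k] [IsAlgClosed k] [CharP k p]
    (x y : Fin (n + 1) → k)
    (hx : LinearIndependent k ![x, fun i => x i ^ p])
    (hy : LinearIndependent k ![y, fun i => y i ^ p])
    (hxy : LinearIndependent k ![x, y]) :
    Submodule.span k {x, fun i => x i ^ p} = Submodule.span k {y, fun i => y i ^ p}
      ↔ ∃ W : Submodule k (Fin (n + 1) → k),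
          (∃ S : Set (Fin (n + 1) → ZMod p),
            W = Submodule.span k
              ((fun v : Fin (n + 1) → ZMod p => fun i => (ZMod.castHom (dvd_refl p) k) (v i)) '' S))
          ∧ Module.finrank k W = 2 ∧ x ∈ W ∧ y ∈ W := by
  classical
  have hp1 : 1 < p := (Fact.out : p.Prime).one_lt
  have hp0 : p ≠ 0 := by omega
  haveI : ExpChar k p := .prime (Fact.out : p.Prime)
  set xp : Fin (n + 1) → k := fun i => x i ^ p with hxp
  set yp : Fin (n + 1) → k := fun i => y i ^ p with hyp
  have hxpair := LinearIndependent.pair_iff.mp hx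
  have hypair := LinearIndependent.pair_iff.mp hy
  have hxypair := LinearIndependent.pair_iff.mp hxy
  constructor
  · intro h
    have hyV : y ∈ Submodule.span k {x, xp} := by
      rw [h]; exact Submodule.subset_span (Set.mem_insert _ _)
    have hypV : yp ∈ Submodule.span k {x, xp} := by
      rw [h]; exact Submodule.subset_span (Set.mem_insert_of_mem _ rfl)
    obtain ⟨a, b, hab⟩ := Submodule.mem_span_pair.mp hyV
    have hb : b ≠ 0 := by
      rintro rfl
      have h0 : a • x + (-1 : k) • y = 0 := by
        rw [← hab]
        simp
      exact absurd (hxypair a (-1) h0).2 (by norm_num)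
    set xpp : Fin (n + 1) → k := fun i => (x i ^ p) ^ p with hxpp
    have hypeq : yp = a ^ p • xp + b ^ p • xpp := by
      funext i
      have hyi : y i = a * x i + b * x i ^ p := by
        have h1 := congrFun hab i
        simpa using h1.symm
      show y i ^ p = _
      simp only [Pi.add_apply, Pi.smul_apply, smul_eq_mul, hxp, hxpp]
      rw [hyi, add_pow_char, mul_pow, mul_pow]
    have hxppV : xpp ∈ Submodule.span k {x, xp} := by
      have h1 : xpp = (b ^ p)⁻¹ • (yp - a ^ p • xp) := by
        rw [hypeq, add_sub_cancel_left, inv_smul_smul₀ (pow_ne_zero _ hb)]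
      rw [h1]
      exact Submodule.smul_mem _ _ (Submodule.sub_mem _ hypV
        (Submodule.smul_mem _ _ (Submodule.subset_span (Set.mem_insert_of_mem _ rfl))))
    obtain ⟨α, β, hαβ⟩ := Submodule.mem_span_pair.mp hxppV
    have hα : α ≠ 0 := by
      rintro rfl
      have key : ∀ i, (x i ^ p) ^ p = β * x i ^ p := by
        intro i
        have h1 := congrFun hαβ i
        simpa [hxp, hxpp] using h1.symm
      have hxne : x ≠ 0 := by
        rintro rfl
        have h0 : (1 : k) • (0 : Fin (n + 1) → k) + (0 : k) • xp = 0 := by simp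
        exact one_ne_zero ((hxpair 1 0 h0).1)
      obtain ⟨i0, hi0⟩ := Function.ne_iff.mp hxne
      simp only [Pi.zero_apply] at hi0
      have hβ : β ≠ 0 := by
        rintro rfl
        have h1 : (x i0 ^ p) ^ p = 0 := by simpa using key i0
        exact hi0 (pow_eq_zero_iff hp0 |>.mp (pow_eq_zero_iff hp0 |>.mp h1))
      set u0 : k := x i0 ^ p with hu0
      have hu0ne : u0 ≠ 0 := pow_ne_zero _ hi0
      obtain ⟨c, hc⟩ := IsAlgClosed.exists_pow_nat_eq u0 (Nat.pos_of_ne_zero hp0)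
      set r : Fin (n + 1) → k := fun i => x i ^ p / u0 with hr
      have hrfix : ∀ i, r i ^ p = r i := by
        intro i
        rw [hr]
        simp only
        rw [div_pow, key i, key i0, mul_div_mul_left _ _ hβ]
      have hxr : ∀ i, x i = c * r i := by
        intro i
        have h1 : (c * r i) ^ p = x i ^ p := by
          rw [mul_pow, hrfix i, hc, hr]
          simp only
          rw [mul_div_cancel₀ _ hu0ne]
        haveI : ExpChar k p := .prime (Fact.out : p.Prime)
        exact (frobenius_inj k p (by simpa [frobenius_def] using h1)).symm
      have hcp : c ^ p = c ^ (p - 1) * c := by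
        conv_lhs => rw [show p = (p - 1) + 1 by omega]
        rw [pow_succ]
      have hxpx : xp = c ^ (p - 1) • x := by
        funext i
        show x i ^ p = _
        have h1 : x i ^ p = c ^ p * r i := by rw [hxr i, mul_pow, hrfix i]
        rw [Pi.smul_apply, smul_eq_mul, h1, hcp, hxr i]
        ring
      have h0 : (c ^ (p - 1)) • x + (-1 : k) • xp = 0 := by
        rw [hxpx]
        simp
      exact absurd (hxpair _ _ h0).2 (by norm_num)
    obtain ⟨b₁, b₂, hb₁ne, hb₂not, he₁, he₂⟩ := fp_exists_roots (p := p) (α ^ p) β (pow_ne_zero _ hα)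
    have hb₂ne : b₂ ≠ 0 := by
      intro h0
      exact hb₂not 0 (by rw [h0, map_zero, zero_mul])
    have hxppi : ∀ i, (x i ^ p) ^ p = α * x i + β * x i ^ p := by
      intro i
      have h1 := congrFun hαβ i
      simpa [hxp, hxpp] using h1.symm
    have hfix : ∀ b : k, α ^ p * b ^ (p * p) + β * b ^ p = b →
        ∀ i, ((α * b ^ p) • x + b • xp) i ^ p = ((α * b ^ p) • x + b • xp) i := by
      intro b hbe i
      simp only [Pi.add_apply, Pi.smul_apply, smul_eq_mul, hxp]
      have e1 : (α * b ^ p * x i + b * x i ^ p) ^ p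
          = (α * b ^ p * x i) ^ p + (b * x i ^ p) ^ p := add_pow_char _ _ p
      have e2 : (α * b ^ p * x i) ^ p = α ^ p * b ^ (p * p) * x i ^ p := by
        rw [mul_pow, mul_pow, ← pow_mul]
      have e3 : (b * x i ^ p) ^ p = b ^ p * (x i ^ p) ^ p := mul_pow _ _ _
      rw [e1, e2, e3, hxppi i]
      linear_combination (x i ^ p) * hbe
    set v₁ : Fin (n + 1) → k := (α * b₁ ^ p) • x + b₁ • xp with hv₁
    set v₂ : Fin (n + 1) → k := (α * b₂ ^ p) • x + b₂ • xp with hv₂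
    have hfix₁ : ∀ i, v₁ i ^ p = v₁ i := by rw [hv₁]; exact hfix b₁ he₁
    have hfix₂ : ∀ i, v₂ i ^ p = v₂ i := by rw [hv₂]; exact hfix b₂ he₂
    have hvind : LinearIndependent k ![v₁, v₂] := by
      rw [LinearIndependent.pair_iff]
      intro s t hst
      have h0 : (s * (α * b₁ ^ p) + t * (α * b₂ ^ p)) • x + (s * b₁ + t * b₂) • xp = 0 := by
        rw [← hst, hv₁, hv₂]
        module
      obtain ⟨h1, h2⟩ := hxpair _ _ h0
      have h1' : s * b₁ ^ p + t * b₂ ^ p = 0 := by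
        have h3 : α * (s * b₁ ^ p + t * b₂ ^ p) = 0 := by linear_combination h1
        exact (mul_eq_zero.mp h3).resolve_left hα
      by_cases ht : t = 0
      · subst ht
        refine ⟨?_, rfl⟩
        rw [zero_mul, add_zero] at h2
        exact (mul_eq_zero.mp h2).resolve_right hb₁ne
      · exfalso
        set lam : k := -s / t with hlam
        have hb2 : b₂ = lam * b₁ := by
          rw [hlam]
          field_simp
          first
          | linear_combination h2
          | linear_combination -h2
        have hb2p : b₂ ^ p = lam * b₁ ^ p := by
          rw [hlam]
          field_simp
          first
          | linear_combination h1'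
          | linear_combination -h1'
        have hlfix : lam ^ p = lam := by
          have h4 : lam ^ p * b₁ ^ p = lam * b₁ ^ p := by
            rw [← mul_pow, ← hb2, hb2p]
          have h5 := mul_right_cancel₀ (pow_ne_zero p hb₁ne) h4
          exact h5
        obtain ⟨m, hm⟩ := fp_fixed_mem lam hlfix
        exact hb₂not m (by rw [hm, hb2])
    have hV12 : Submodule.span k {v₁, v₂} = Submodule.span k {x, xp} := by
      apply Submodule.eq_of_le_of_finrank_le
      · rw [Submodule.span_le]
        intro z hz
        simp only [Set.mem_insert_iff, Set.mem_singleton_iff] at hz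
        rcases hz with rfl | rfl
        · exact Submodule.mem_span_pair.mpr ⟨α * b₁ ^ p, b₁, hv₁.symm⟩
        · exact Submodule.mem_span_pair.mpr ⟨α * b₂ ^ p, b₂, hv₂.symm⟩
      · rw [fp_finrank_span_pair hx, fp_finrank_span_pair hvind]
    obtain ⟨u₁, hu₁⟩ := fp_fixed_vec v₁ hfix₁
    obtain ⟨u₂, hu₂⟩ := fp_fixed_vec v₂ hfix₂
    refine ⟨Submodule.span k {v₁, v₂}, ⟨{u₁, u₂}, ?_⟩, ?_, ?_, ?_⟩
    · rw [Set.image_insert_eq, Set.image_singleton, hu₁, hu₂]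
    · exact fp_finrank_span_pair hvind
    · rw [hV12]
      exact Submodule.subset_span (Set.mem_insert _ _)
    · rw [hV12]
      exact hyV
  · rintro ⟨W, ⟨S, rfl⟩, hrank, hxW, hyW⟩
    have hxpW := fp_span_stable S hxW
    have hypW := fp_span_stable S hyW
    have h1 : Submodule.span k {x, xp} = Submodule.span k
        ((fun v : Fin (n + 1) → ZMod p => fun i => (ZMod.castHom (dvd_refl p) k) (v i)) '' S) := by
      apply Submodule.eq_of_le_of_finrank_le
      · rw [Submodule.span_le]
        intro z hz
        simp only [Set.mem_insert_iff, Set.mem_singleton_iff] at hz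
        rcases hz with rfl | rfl
        · exact hxW
        · exact hxpW
      · rw [fp_finrank_span_pair hx, hrank]
    have h2 : Submodule.span k {y, yp} = Submodule.span k
        ((fun v : Fin (n + 1) → ZMod p => fun i => (ZMod.castHom (dvd_refl p) k) (v i)) '' S) := by
      apply Submodule.eq_of_le_of_finrank_le
      · rw [Submodule.span_le]
        intro z hz
        simp only [Set.mem_insert_iff, Set.mem_singleton_iff] at hz
        rcases hz with rfl | rfl
        · exact hyW
        · exact hypW
      · rw [fp_finrank_span_pair hy, hrank]
    rw [h1, h2]
end

section
/- Let p be prime, V a 4-dimensional vector space over an extension of F_p containing F_{p²}, V_1 ⊂ V a fixed 2-dimensional subspace with complement V_2, and let a cyclic group of order p+1 act on V_1 (via F_{p²}^× acting on F_{p²}) with eigenvalues λ, λ^p on a basis e_1, e_2, and similarly on V_2 with basis e_3, e_4. Consider the induced action on Γ^{p−1}(Λ²V). A basis monomial γ_i(e_1∧e_2)·γ_r(e_1∧e_3)γ_s(e_1∧e_4)γ_t(e_2∧e_3)γ_u(e_2∧e_4)·γ_m(e_3∧e_4) with i+r+s+t+u+m = p−1 is invariant under both cyclic groups if and only if (i,r,s,t,u,m)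 equals (p−1,0,0,0,0,0) or (0,0,0,0,0,p−1). (This is the combinatorial core of the computation of invariants of Γ^{p−1}Λ²V.) -/
/-- the basis monomial of `Γ^{p−1}(Λ²V)` indexed by `(i,r,s,t,u,m)` with
`i+r+s+t+u+m = p−1` is invariant under both cyclic groups of order `p+1` (weights
`i(p+1)+r+s+(t+u)p` and `m(p+1)+r+t+(s+u)p` modulo `p²−1`) iff the tuple is
`(p−1,0,0,0,0,0)` or `(0,0,0,0,0,p−1)`. -/
theorem stmt_6 (p : ℕ) (hp : p.Prime) (i r s t u m : ℕ)
    (hsum : i + r + s + t + u + m = p - 1) :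
    ((p ^ 2 - 1) ∣ (i * (p + 1) + r + s + (t + u) * p)
        ∧ (p ^ 2 - 1) ∣ (m * (p + 1) + r + t + (s + u) * p))
      ↔ ((i, r, s, t, u, m) = (p - 1, 0, 0, 0, 0, 0)
        ∨ (i, r, s, t, u, m) = (0, 0, 0, 0, 0, p - 1)) := by
  have hp2 : 2 ≤ p := hp.two_le
  obtain ⟨k, rfl⟩ : ∃ k, p = k + 1 := ⟨p - 1, by omega⟩
  have hk1 : 1 ≤ k := by omega
  have hsq : (k + 1) ^ 2 - 1 = k * (k + 2) := by
    rw [show (k + 1) ^ 2 = k * (k + 2) + 1 from by ring]; simp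
  rw [hsq]
  simp only [Prod.mk.injEq, Nat.add_sub_cancel]
  have hsum' : i + r + s + t + u + m = k := by omega
  constructor
  · rintro ⟨h1, h2⟩
    have hle : i * (k + 1 + 1) + r + s + (t + u) * (k + 1) ≤ k * (k + 2) := by
      nlinarith [hsum']
    rcases lt_or_eq_of_le hle with h | h
    · have h0 := Nat.eq_zero_of_dvd_of_lt h1 h
      simp only [Nat.add_eq_zero, Nat.mul_eq_zero] at h0
      right; omega
    · have key : (r + s + m) * k + (r + s + t + u + 2 * m) = 0 := by
        zify at h hsum' ⊢
        linear_combination (-1 : ℤ) * h + ((k : ℤ) + 2) * hsum'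
      simp only [Nat.add_eq_zero, Nat.mul_eq_zero] at key
      left; omega
  · rintro (⟨hi, hr, hs, ht, hu, hm⟩ | ⟨hi, hr, hs, ht, hu, hm⟩)
    · subst hr; subst hs; subst ht; subst hu; subst hm; subst hi
      exact ⟨⟨1, by ring⟩, by simp⟩
    · subst hi; subst hr; subst hs; subst ht; subst hu; subst hm
      exact ⟨by simp, ⟨1, by ring⟩⟩
end

section
/- More generally, for c ∈ {1, 2}: if nonnegative integers i,r,s,t,u,m satisfy i+r+s+t+u+m = c(p−1), i(p+1)+r+s+(t+u)p = a(p²−1), and m(p+1)+r+t+(s+u)p = b(p²−1) for some integers a, b, then u − r is divisible by p+1, a,b ≤ c with equality in a ≤ c only when r=s=t=u=m=0 (and similarly for b), and when c = 1 the only solutions are (i,…,m) = (p−1,0,0,0,0,0) and (0,0,0,0,0,p−1). -/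
set_option maxHeartbeats 1000000 in
/-- the combinatorial weight analysis for `c ∈ {1,2}`. -/
theorem stmt_7 (p : ℕ) (hp : p.Prime) (hp3 : 3 ≤ p) (c : ℕ) (hc : c = 1 ∨ c = 2)
    (i r s t u m a b : ℕ)
    (hsum : i + r + s + t + u + m = c * (p - 1))
    (ha : i * (p + 1) + r + s + (t + u) * p = a * (p ^ 2 - 1))
    (hb : m * (p + 1) + r + t + (s + u) * p = b * (p ^ 2 - 1)) :
    (((p : ℤ) + 1) ∣ ((u : ℤ) - (r : ℤ)))
    ∧ ((u : ℤ) - (r : ℤ) = ((a : ℤ) + (b : ℤ) - (c : ℤ)) * ((p : ℤ) + 1))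
    ∧ a ≤ c ∧ b ≤ c
    ∧ (a = c → r = 0 ∧ s = 0 ∧ t = 0 ∧ u = 0 ∧ m = 0)
    ∧ (b = c → r = 0 ∧ s = 0 ∧ t = 0 ∧ u = 0 ∧ i = 0)
    ∧ (c = 1 →
        (i, r, s, t, u, m) = (p - 1, 0, 0, 0, 0, 0)
        ∨ (i, r, s, t, u, m) = (0, 0, 0, 0, 0, p - 1)) := by
  have hp1 : 1 ≤ p := by omega
  have hp2 : 1 ≤ p ^ 2 := by nlinarith
  -- integer versions
  have hsumZ : (i : ℤ) + r + s + t + u + m = c * ((p : ℤ) - 1) := by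
    have := hsum; zify [hp1] at this; linarith
  have haZ : (i : ℤ) * (p + 1) + r + s + (t + u) * p = a * ((p : ℤ) ^ 2 - 1) := by
    have := ha; zify [hp2] at this; linarith
  have hbZ : (m : ℤ) * (p + 1) + r + t + (s + u) * p = b * ((p : ℤ) ^ 2 - 1) := by
    have := hb; zify [hp2] at this; linarith
  have hpne : (p : ℤ) - 1 ≠ 0 := by
    have : (3 : ℤ) ≤ p := by exact_mod_cast hp3
    linarith
  have key : (u : ℤ) - r = ((a : ℤ) + b - c) * ((p : ℤ) + 1) := by
    have h : ((u : ℤ) - r) * ((p : ℤ) - 1)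
        = (((a : ℤ) + b - c) * ((p : ℤ) + 1)) * ((p : ℤ) - 1) := by
      linear_combination haZ + hbZ - ((p : ℤ) + 1) * hsumZ
    exact mul_right_cancel₀ hpne h
  -- a ≤ c
  have hpZ : (3 : ℤ) ≤ (p : ℤ) := by exact_mod_cast hp3
  have hpos : (0 : ℤ) < (p : ℤ) ^ 2 - 1 := by nlinarith
  have hnn : ∀ n : ℕ, (0 : ℤ) ≤ (n : ℤ) := fun n => Int.natCast_nonneg n
  have hale : a ≤ c := by
    have h1 : (a : ℤ) * ((p : ℤ) ^ 2 - 1) ≤ (c : ℤ) * ((p : ℤ) ^ 2 - 1) := by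
      rw [← haZ]
      have hcr : (c : ℤ) * ((p : ℤ) ^ 2 - 1)
          = ((i : ℤ) + r + s + t + u + m) * ((p : ℤ) + 1) := by
        rw [hsumZ]; ring
      rw [hcr]
      have h0 : (0 : ℤ) ≤ (r : ℤ) * p + (s : ℤ) * p + (t : ℤ) + u + (m : ℤ) * ((p : ℤ) + 1) := by
        positivity
      linarith [h0]
    have := le_of_mul_le_mul_right h1 hpos
    exact_mod_cast this
  have hble : b ≤ c := by
    have h1 : (b : ℤ) * ((p : ℤ) ^ 2 - 1) ≤ (c : ℤ) * ((p : ℤ) ^ 2 - 1) := by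
      rw [← hbZ]
      have hcr : (c : ℤ) * ((p : ℤ) ^ 2 - 1)
          = ((i : ℤ) + r + s + t + u + m) * ((p : ℤ) + 1) := by
        rw [hsumZ]; ring
      rw [hcr]
      have h0 : (0 : ℤ) ≤ (r : ℤ) * p + (t : ℤ) * p + (s : ℤ) + u + (i : ℤ) * ((p : ℤ) + 1) := by
        positivity
      linarith [h0]
    have := le_of_mul_le_mul_right h1 hpos
    exact_mod_cast this
  -- equality cases
  have haeq : a = c → r = 0 ∧ s = 0 ∧ t = 0 ∧ u = 0 ∧ m = 0 := by
    intro hac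
    subst hac
    have h0 : (r : ℤ) * p + s * p + t + u + m * (p + 1) = 0 := by
      have h1 : (a : ℤ) * ((p : ℤ) ^ 2 - 1) = ((i : ℤ) + r + s + t + u + m) * ((p : ℤ) + 1) := by
        rw [hsumZ]; ring
      linear_combination -h1 - haZ
    have h0' : r * p + s * p + t + u + m * (p + 1) = 0 := by exact_mod_cast h0
    have := Nat.eq_zero_of_add_eq_zero_left h0'
    simp only [Nat.add_eq_zero, Nat.mul_eq_zero] at h0'
    omega
  have hbeq : b = c → r = 0 ∧ s = 0 ∧ t = 0 ∧ u = 0 ∧ i = 0 := by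
    intro hbc
    subst hbc
    have h0 : (r : ℤ) * p + t * p + s + u + i * (p + 1) = 0 := by
      have h1 : (b : ℤ) * ((p : ℤ) ^ 2 - 1) = ((i : ℤ) + r + s + t + u + m) * ((p : ℤ) + 1) := by
        rw [hsumZ]; ring
      linear_combination -h1 - hbZ
    have h0' : r * p + t * p + s + u + i * (p + 1) = 0 := by exact_mod_cast h0
    simp only [Nat.add_eq_zero, Nat.mul_eq_zero] at h0'
    omega
  refine ⟨⟨(a : ℤ) + b - c, by linear_combination key⟩, key, hale, hble, haeq, hbeq, ?_⟩
  intro hc1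
  subst hc1
  have hrle : r ≤ p - 1 := by omega
  have hule : u ≤ p - 1 := by omega
  interval_cases a
  · interval_cases b
    · exfalso
      have h1 : (u : ℤ) - r = -(((p : ℤ)) + 1) := by rw [key]; push_cast; ring
      have h2 : (r : ℤ) ≤ (p : ℤ) - 1 := by
        have : (r : ℤ) ≤ ((p - 1 : ℕ) : ℤ) := by exact_mod_cast hrle
        rw [Nat.cast_sub hp1] at this; exact this
      have h3 : (0 : ℤ) ≤ u := by positivity
      linarith
    · obtain ⟨hr, hs, ht, hu, hi⟩ := hbeq rfl
      right
      have : m = p - 1 := by omega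
      simp [hr, hs, ht, hu, hi, this]
  · obtain ⟨hr, hs, ht, hu, hm⟩ := haeq rfl
    left
    have : i = p - 1 := by omega
    simp [hr, hs, ht, hu, hm, this]
end

section
/- Let q(x) = q₁q₂ − q₃q₄ + q₅q₆ and b(x) = q₁q₂^p + q₁^p q₂ − q₃q₄^p − q₃^p q₄ + q₅q₆^p + q₅^p q₆ in k[q₁,…,q₆], k a field of characteristic p > 0. The derivation E = q₁∂/∂q₁ − q₂∂/∂q₂ annihilates q, but E(b) = (1−p)q₁q₂^p + (p−1)q₁^p q₂ = q₁q₂^p − q₁^p q₂ (in characteristic p), which is a nonzero polynomial not contained in the ideal (q, b). -/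
open MvPolynomial

/-- with `q = q₁q₂ − q₃q₄ + q₅q₆` and `b = q₁q₂^p + q₁^p q₂ − q₃q₄^p − q₃^p q₄
+ q₅q₆^p + q₅^p q₆` over a field of characteristic `p ≥ 3`, the derivation
`E = q₁∂₁ − q₂∂₂` kills `q`, sends `b` to `q₁q₂^p − q₁^p q₂`, and this polynomial is a
nonzero polynomial not in the ideal `(q, b)`. -/
theorem stmt_8 (p : ℕ) (hp : p.Prime) (hp3 : 3 ≤ p)
    (k : Type*) [Field k] [CharP k p]
    (q b : MvPolynomial (Fin 6) k)
    (hq : q = X 0 * X 1 - X 2 * X 3 + X 4 * X 5)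
    (hb : b = X 0 * X 1 ^ p + X 0 ^ p * X 1 - X 2 * X 3 ^ p - X 2 ^ p * X 3
      + X 4 * X 5 ^ p + X 4 ^ p * X 5)
    (E : Derivation k (MvPolynomial (Fin 6) k) (MvPolynomial (Fin 6) k))
    (hE0 : E (X 0) = X 0) (hE1 : E (X 1) = -X 1)
    (hE : ∀ i : Fin 6, 2 ≤ (i : ℕ) → E (X i) = 0) :
    E q = 0
    ∧ E b = X 0 * X 1 ^ p - X 0 ^ p * X 1
    ∧ (X 0 * X 1 ^ p - X 0 ^ p * X 1 : MvPolynomial (Fin 6) k) ≠ 0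
    ∧ (X 0 * X 1 ^ p - X 0 ^ p * X 1 : MvPolynomial (Fin 6) k) ∉ Ideal.span {q, b} := by
  have hE2 : E (X 2) = 0 := hE 2 (by decide)
  have hE3 : E (X 3) = 0 := hE 3 (by decide)
  have hE4 : E (X 4) = 0 := hE 4 (by decide)
  have hE5 : E (X 5) = 0 := hE 5 (by decide)
  have hpc : ((p : MvPolynomial (Fin 6) k)) = 0 := by
    exact_mod_cast CharP.cast_eq_zero (MvPolynomial (Fin 6) k) p
  have hpow : ∀ x : MvPolynomial (Fin 6) k, E (x ^ p) = (p : MvPolynomial (Fin 6) k) * x ^ (p - 1) * E x := by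
    intro x
    rw [Derivation.leibniz_pow]
    simp [nsmul_eq_mul, mul_assoc]
  -- the evaluation homomorphism sending X0 ↦ X, X1 ↦ 1, X2 ↦ X, X3 ↦ 1, X4,X5 ↦ 0
  set φ : MvPolynomial (Fin 6) k →ₐ[k] Polynomial k :=
    aeval ![Polynomial.X, 1, Polynomial.X, 1, 0, 0] with hφ
  have hφq : φ q = 0 := by
    rw [hq]; simp [hφ]
  have hφb : φ b = 0 := by
    rw [hb]; simp [hφ, hp.ne_zero]
  have hφt : φ (X 0 * X 1 ^ p - X 0 ^ p * X 1) = Polynomial.X - Polynomial.X ^ p := by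
    simp [hφ]
  have htne : (Polynomial.X - Polynomial.X ^ p : Polynomial k) ≠ 0 := by
    intro h
    have h1 : (Polynomial.X - Polynomial.X ^ p : Polynomial k).coeff 1 = 0 := by
      rw [h]; simp
    rw [Polynomial.coeff_sub, Polynomial.coeff_X_one, Polynomial.coeff_X_pow] at h1
    have : p ≠ 1 := by omega
    rw [if_neg (fun h' => this h'.symm)] at h1; simp at h1
  refine ⟨?_, ?_, ?_, ?_⟩
  · rw [hq]
    simp [Derivation.leibniz, hE0, hE1, hE2, hE3, hE4, hE5]
    ring
  · rw [hb]
    simp [Derivation.leibniz, hpow, hE0, hE1, hE2, hE3, hE4, hE5, hpc]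
    ring
  · intro h
    apply htne
    rw [← hφt, h, map_zero]
  · intro hmem
    apply htne
    rw [← hφt]
    have : Ideal.span {q, b} ≤ RingHom.ker (φ : MvPolynomial (Fin 6) k →+* Polynomial k) := by
      rw [Ideal.span_le]
      intro x hx
      rcases hx with h | h <;> simp_all [RingHom.mem_ker]
    exact this hmem
end

section
/- Let k be an algebraically closed field of characteristic p, n ≥ 3, and consider the map sending a point x ∈ P^n(k) \\ P^n(F_p) to the 2-plane in k^{n+1} spanned by x and x^p (coordinatewise Frobenius). Near an F_p-rational point, in the affine chart obtained by the substitutions x₀ = 1, x_i = s_i s_n for 1 ≤ i < n, x_n = s_n, this map extends across the exceptional divisor {s_n = 0} of the blow-up to the map sending (s₁,…,s_{n−1}, 0) to the 2-plane spanned by (1,0,…,0) and (0, s₁,…,s_{n−1}, 1); in particular the extended map on the exceptional divisor is a closed embedding whose image consists exactly of the 2-planes containing the blown-up rational point. -/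
/-- extension of the Gauss map `x ↦ span{x, x^p}` across the exceptional
divisor of the blow-up at the `F_p`-rational point `(1:0:…:0)`.  In the chart `x₀ = 1`,
`x_i = s_i·s_n` (`0 < i < n`), `x_n = s_n`, one has (a) for `s_n ≠ 0`,
`span{x, x^p} = span{x^p, u}` where `u = (x − x^p)/s_n` specialises at `s_n = 0` to
`w(s) = (0, s₁, …, s_{n−1}, 1)`; (b) `e₀ = (1,0,…,0)` and `w(s)` are always linearly
independent; (c) `s ↦ span{e₀, w(s)}` is injective (in the middle coordinates); and
(d) its image is exactly the set of 2-planes containing `e₀` (and meeting the chart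
`v_n ≠ 0`). -/
theorem stmt_19 (p n : ℕ) [Fact p.Prime] (hn : 3 ≤ n)
    (k : Type*) [Field k] [CharP k p] :
    (∀ (s : Fin (n + 1) → k) (sn : k), sn ≠ 0 →
      Submodule.span k
          {(fun i => if i = 0 then 1 else if i = Fin.last n then sn else s i * sn :
              Fin (n + 1) → k),
           (fun i => (if i = 0 then 1 else if i = Fin.last n then sn else s i * sn) ^ p)}
        = Submodule.span k
          {(fun i => (if i = 0 then 1 else if i = Fin.last n then sn else s i * sn) ^ p :
              Fin (n + 1) → k),
           (fun i => if i = 0 then 0 else if i = Fin.last n then 1 - sn ^ (p - 1)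
              else s i - s i ^ p * sn ^ (p - 1))})
    ∧ (∀ s : Fin (n + 1) → k,
        LinearIndependent k
          ![(Pi.single 0 1 : Fin (n + 1) → k),
            fun i => if i = 0 then 0 else if i = Fin.last n then 1 else s i])
    ∧ (∀ s s' : Fin (n + 1) → k,
        Submodule.span k
            {(Pi.single 0 1 : Fin (n + 1) → k),
             fun i => if i = 0 then 0 else if i = Fin.last n then 1 else s i}
          = Submodule.span k
            {(Pi.single 0 1 : Fin (n + 1) → k),
             fun i => if i = 0 then 0 else if i = Fin.last n then 1 else s' i} →
        ∀ i : Fin (n + 1), i ≠ 0 → i ≠ Fin.last n → s i = s' i)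
    ∧ (∀ W : Submodule k (Fin (n + 1) → k),
        (Module.finrank k W = 2 ∧ (Pi.single 0 1 : Fin (n + 1) → k) ∈ W
            ∧ ∃ v ∈ W, v (Fin.last n) ≠ 0)
          ↔ ∃ s : Fin (n + 1) → k,
              W = Submodule.span k
                {(Pi.single 0 1 : Fin (n + 1) → k),
                 fun i => if i = 0 then 0 else if i = Fin.last n then 1 else s i}) := by
  have hp : 0 < p := (Fact.out : p.Prime).pos
  have hps : p - 1 + 1 = p := Nat.succ_pred_eq_of_pos hp
  have hxp : ∀ t : k, t ^ p = t * t ^ (p - 1) := by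
    intro t; conv_lhs => rw [← hps]
    rw [pow_succ']
  have hlast : (Fin.last n : Fin (n + 1)) ≠ 0 := by
    simp [Fin.ext_iff, Fin.last]; omega
  have hsingle : ∀ i : Fin (n + 1), (Pi.single 0 1 : Fin (n + 1) → k) i
      = if i = 0 then 1 else 0 := by
    intro i; by_cases h : i = 0 <;> simp [h, Pi.single_apply]
  -- part b
  have partb : ∀ s : Fin (n + 1) → k,
        LinearIndependent k
          ![(Pi.single 0 1 : Fin (n + 1) → k),
            fun i => if i = 0 then 0 else if i = Fin.last n then 1 else s i] := by
    intro s
    rw [LinearIndependent.pair_iff]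
    intro a b hab
    have h0 := congrFun hab 0
    have hl := congrFun hab (Fin.last n)
    simp [hsingle, hlast] at h0 hl
    exact ⟨h0, hl⟩
  have hrange : ∀ x y : Fin (n + 1) → k, Set.range ![x, y] = {x, y} := by
    intro x y; ext v; simp [Fin.exists_fin_two, or_comm]
  have hrank2 : ∀ s : Fin (n + 1) → k,
      Module.finrank k (Submodule.span k
        {(Pi.single 0 1 : Fin (n + 1) → k),
         fun i => if i = 0 then 0 else if i = Fin.last n then 1 else s i}) = 2 := by
    intro s
    have := finrank_span_eq_card (partb s)
    rwa [hrange] at this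
  refine ⟨?_, partb, ?_, ?_⟩
  · -- part a
    intro s sn hsn
    set x : Fin (n + 1) → k :=
      fun i => if i = 0 then 1 else if i = Fin.last n then sn else s i * sn with hx
    set u : Fin (n + 1) → k :=
      fun i => if i = 0 then 0 else if i = Fin.last n then 1 - sn ^ (p - 1)
        else s i - s i ^ p * sn ^ (p - 1) with hu
    apply le_antisymm <;> rw [Submodule.span_le] <;> rintro v (rfl | rfl)
    · -- x ∈ span {x^p, u}
      rw [SetLike.mem_coe, Submodule.mem_span_pair]
      refine ⟨1, sn, funext fun i => ?_⟩
      by_cases hi0 : i = 0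
      · simp [hx, hu, hi0, hlast.symm]
      · by_cases hil : i = Fin.last n
        · simp only [hx, hu, Pi.add_apply, Pi.smul_apply, smul_eq_mul, hi0, hil, if_neg hlast,
            if_pos rfl, if_true]
          rw [hxp sn]; ring
        · simp only [hx, hu, Pi.add_apply, Pi.smul_apply, smul_eq_mul, if_neg hi0, if_neg hil]
          rw [mul_pow, hxp sn]; ring
    · exact Submodule.subset_span (Set.mem_insert _ _)
    · exact Submodule.subset_span (Set.mem_insert_of_mem _ rfl)
    · -- u ∈ span {x, x^p}
      rw [SetLike.mem_coe, Submodule.mem_span_pair]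
      refine ⟨sn⁻¹, -sn⁻¹, funext fun i => ?_⟩
      by_cases hi0 : i = 0
      · simp [hx, hu, hi0]
      · by_cases hil : i = Fin.last n
        · simp only [hx, hu, Pi.add_apply, Pi.smul_apply, smul_eq_mul, hi0, hil, if_neg hlast,
            if_pos rfl, if_true, neg_mul, ← sub_eq_add_neg]
          rw [hxp sn]; field_simp
        · simp only [hx, hu, Pi.add_apply, Pi.smul_apply, smul_eq_mul, if_neg hi0, if_neg hil,
            neg_mul, ← sub_eq_add_neg]
          rw [mul_pow, hxp sn]; field_simp
  · -- part c
    intro s s' h i hi0 hil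
    have hmem : (fun i => if i = 0 then 0 else if i = Fin.last n then 1 else s i :
        Fin (n + 1) → k) ∈ Submodule.span k
          {(Pi.single 0 1 : Fin (n + 1) → k),
           fun i => if i = 0 then 0 else if i = Fin.last n then 1 else s' i} := by
      rw [← h]
      exact Submodule.subset_span (Set.mem_insert_of_mem _ rfl)
    rw [Submodule.mem_span_pair] at hmem
    obtain ⟨a, b, hab⟩ := hmem
    have h0 := congrFun hab 0
    have hl := congrFun hab (Fin.last n)
    have hi := congrFun hab i
    simp [hsingle, hlast] at h0 hl
    simp [hsingle, hi0, hil, h0, hl] at hi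
    exact hi.symm
  · -- part d
    intro W
    constructor
    · rintro ⟨hrank, he, v, hv, hvl⟩
      set c := v (Fin.last n) with hc
      set w : Fin (n + 1) → k := c⁻¹ • (v - v 0 • (Pi.single 0 1 : Fin (n + 1) → k)) with hw
      have hwW : w ∈ W := Submodule.smul_mem _ _ (Submodule.sub_mem _ hv
        (Submodule.smul_mem _ _ he))
      have hw0 : w 0 = 0 := by simp [hw, hsingle]
      have hwl : w (Fin.last n) = 1 := by
        simp [hw, hsingle, hlast, ← hc, inv_mul_cancel₀ hvl]
      refine ⟨w, ?_⟩
      have hfw : (fun i => if i = 0 then 0 else if i = Fin.last n then 1 else w i)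
          = w := by
        funext i
        by_cases hi0 : i = 0
        · simp [hi0, hw0]
        · by_cases hil : i = Fin.last n
          · simp [hi0, hil, hwl]; omega
          · simp [hi0, hil]
      rw [hfw]
      have hle : Submodule.span k {(Pi.single 0 1 : Fin (n + 1) → k), w} ≤ W := by
        rw [Submodule.span_le]
        rintro z (rfl | rfl)
        · exact he
        · exact hwW
      have h2 : Module.finrank k (Submodule.span k
          {(Pi.single 0 1 : Fin (n + 1) → k), w}) = 2 := by
        have := hrank2 w
        rwa [hfw] at this
      exact (Submodule.eq_of_le_of_finrank_eq hle (h2.trans hrank.symm)).symm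
    · rintro ⟨s, rfl⟩
      refine ⟨hrank2 s, Submodule.subset_span (Set.mem_insert _ _),
        ⟨_, Submodule.subset_span (Set.mem_insert_of_mem _ rfl), ?_⟩⟩
      simp [hlast]
end
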